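/- Suppose g_j^{a,a'}(S) ≠ 0 and g_j^{a',a}(T S) ≠ 0, where T S = T_j^{a,a'} S. Define MP metrics m_j^{a',a}(S) := f_j^{a',a}(S)/g_j^{a',a}(S) (with f_j^{a',a}(S) = -f_j^{a,a'}(S), g_j^{a',a}(S) = -g_j^{a,a'}(S)). If the occupancies x_{pj}^{a'}(TS) and x_{pj}^{a}(S) are positive for some p, then m_j^{a',a}(S) = m_j^{a',a}(T S), i.e., the marginal productivity metric at (j, a', a) is invariant under the single-state policy modification. -/

import Mathlib

/-!
Let `M_σ = 1 - β P_σ`, so that the value `X` of a policy `σ` solves `M_σ X = r_σ`. If `τ` switches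
the action of `σ` at `j` from `a` to `b` and has value `Y`, then `M_τ (Y - X) = r_τ - M_τ X` is
supported at `j`, where it equals the marginal reward `f_j^{b,a}(σ)`. Pairing with `p` gives
`p ⬝ (Y - X) = x_j^b(τ) f_j^{b,a}(σ)` for the occupancy `x(τ) = p M_τ⁻¹`, and exchanging the roles
of the two policies gives `p ⬝ (Y - X) = x_j^a(σ) f_j^{b,a}(τ)`. The same holds for the resource
`q`, and the nonzero occupancies cancel in the ratio.
-/

open Matrix

section

variable {R : Type*} [CommRing R] {N : Type*} [Fintype N] {A : Type*}

def policyMatrix (P : A → Matrix N N R) (σ : N → A) : Matrix N N R :=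
  Matrix.of fun i j => P (σ i) i j

/-- The paper's `f_j^{b,a}`. -/
def marginalReward (P : A → Matrix N N R) (β : R) (r : A → N → R) (X : N → R) (j : N)
    (a b : A) : R :=
  r b j - r a j + β * ((P b - P a) *ᵥ X) j

def IsPolicyValue (P : A → Matrix N N R) (β : R) (r : A → N → R) (σ : N → A) (X : N → R) :
    Prop :=
  ∀ i, X i = r (σ i) i + β * (P (σ i) *ᵥ X) i

theorem marginalReward_swap (P : A → Matrix N N R) (β : R) (r : A → N → R) (X : N → R) (j : N)
    (a b : A) : marginalReward P β r X j a b = -marginalReward P β r X j b a := by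
  simp only [marginalReward, ← neg_sub (P a) (P b), neg_mulVec, Pi.neg_apply]
  ring

variable [DecidableEq N]

theorem isUnit_det_of_vecMul_inv_apply_ne_zero {M : Matrix N N R} {p : N → R} {j : N}
    (h : (p ᵥ* M⁻¹) j ≠ 0) : IsUnit M.det := by
  by_contra hM
  simp [nonsing_inv_apply_not_isUnit M hM] at h

theorem vecMul_inv_apply_mul_eq_dotProduct {M : Matrix N N R} (hM : IsUnit M.det) (p : N → R)
    {x : N → R} {j : N} {c : R} (hx : M *ᵥ x = Pi.single j c) :
    (p ᵥ* M⁻¹) j * c = p ⬝ᵥ x := by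
  have hx' : x = M⁻¹ *ᵥ Pi.single j c := by
    rw [← hx, mulVec_mulVec, nonsing_inv_mul _ hM, one_mulVec]
  rw [hx', dotProduct_mulVec, dotProduct_single]

variable {P : A → Matrix N N R} {β : R} {r : A → N → R}

theorem one_sub_smul_policyMatrix_mulVec_sub_apply {σ τ : N → A} {X Y : N → R}
    (hX : IsPolicyValue P β r σ X) (hY : IsPolicyValue P β r τ Y) (i : N) :
    ((1 - β • policyMatrix P τ) *ᵥ (Y - X)) i =
      r (τ i) i - r (σ i) i + β * ((P (τ i) - P (σ i)) *ᵥ X) i := by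
  have hrow : ∀ v, (policyMatrix P τ *ᵥ v) i = (P (τ i) *ᵥ v) i := fun _ => rfl
  simp only [sub_mulVec, one_mulVec, smul_mulVec, Pi.sub_apply, Pi.smul_apply, smul_eq_mul,
    hrow, mulVec_sub]
  linear_combination hY i - hX i

theorem one_sub_smul_policyMatrix_update_mulVec_sub {σ : N → A} {j : N} {a b : A}
    (hσ : σ j = a) {X Y : N → R}
    (hX : IsPolicyValue P β r σ X) (hY : IsPolicyValue P β r (Function.update σ j b) Y) :
    (1 - β • policyMatrix P (Function.update σ j b)) *ᵥ (Y - X) =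
      Pi.single j (marginalReward P β r X j a b) := by
  funext i
  rw [one_sub_smul_policyMatrix_mulVec_sub_apply hX hY]
  rcases eq_or_ne i j with rfl | hij
  · simp [marginalReward, hσ]
  · simp [hij]

variable {σ : N → A} {j : N} {a b : A} {X Y : N → R}

theorem occupancy_update_mul_marginalReward (hσ : σ j = a)
    (hX : IsPolicyValue P β r σ X) (hY : IsPolicyValue P β r (Function.update σ j b) Y)
    (hM : IsUnit (1 - β • policyMatrix P (Function.update σ j b)).det) (p : N → R) :
    (p ᵥ* (1 - β • policyMatrix P (Function.update σ j b))⁻¹) j * marginalReward P β r X j a b =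
      p ⬝ᵥ (Y - X) :=
  vecMul_inv_apply_mul_eq_dotProduct hM p (one_sub_smul_policyMatrix_update_mulVec_sub hσ hX hY)

theorem occupancy_mul_marginalReward_update (hσ : σ j = a)
    (hX : IsPolicyValue P β r σ X) (hY : IsPolicyValue P β r (Function.update σ j b) Y)
    (hM : IsUnit (1 - β • policyMatrix P σ).det) (p : N → R) :
    (p ᵥ* (1 - β • policyMatrix P σ)⁻¹) j * marginalReward P β r Y j a b = p ⬝ᵥ (Y - X) := by
  have hback : Function.update (Function.update σ j b) j a = σ := by
    rw [Function.update_idem, ← hσ, Function.update_eq_self]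
  have key := occupancy_update_mul_marginalReward (Function.update_self j b σ) hY
    (by rwa [hback]) (by rwa [hback]) p
  rw [hback, marginalReward_swap, mul_neg, ← neg_sub Y X, dotProduct_neg] at key
  exact neg_injective key

end

theorem div_eq_div_of_mul_eq_mul {K : Type*} [Field K] {u v x₁ x₂ y₁ y₂ : K} (hu : u ≠ 0)
    (hv : v ≠ 0) (hx : u * x₁ = v * x₂) (hy : u * y₁ = v * y₂) : x₁ / y₁ = x₂ / y₂ := by
  rw [← mul_div_mul_left x₁ y₁ hu, hx, hy, mul_div_mul_left _ _ hv]

theorem stmt11_general {N : Type*} [Fintype N] [DecidableEq N] {A : Type*}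
    (P : A → Matrix N N ℝ)
    (β : ℝ)
    (h q : A → N → ℝ)
    (σ : N → A) (j0 : N) (a a' : A) (hja : σ j0 = a)
    (F : N → ℝ) (hF : ∀ i, F i = h (σ i) i + β * (P (σ i) *ᵥ F) i)
    (G : N → ℝ) (hG : ∀ i, G i = q (σ i) i + β * (P (σ i) *ᵥ G) i)
    (FT : N → ℝ)
    (hFT : ∀ i, FT i = h (Function.update σ j0 a' i) i +
      β * (P (Function.update σ j0 a' i) *ᵥ FT) i)
    (GT : N → ℝ)
    (hGT : ∀ i, GT i = q (Function.update σ j0 a' i) i +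
      β * (P (Function.update σ j0 a' i) *ᵥ GT) i)
    (hpos : ∃ p : N → ℝ,
      0 < (p ᵥ* (((1 : Matrix N N ℝ) -
        β • Matrix.of (fun i j => P (Function.update σ j0 a' i) i j))⁻¹)) j0 ∧
      0 < (p ᵥ* (((1 : Matrix N N ℝ) -
        β • Matrix.of (fun i j => P (σ i) i j))⁻¹)) j0) :
    (h a' j0 - h a j0 + β * ((P a' - P a) *ᵥ F) j0) /
      (q a j0 - q a' j0 + β * ((P a - P a') *ᵥ G) j0)
    =
    (h a' j0 - h a j0 + β * ((P a' - P a) *ᵥ FT) j0) /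
      (q a j0 - q a' j0 + β * ((P a - P a') *ᵥ GT) j0) := by
  obtain ⟨p, hu, hv⟩ := hpos
  -- A singular `1 - β P` would make its `⁻¹` the junk value `0` and the occupancy `0`.
  have hT := isUnit_det_of_vecMul_inv_apply_ne_zero hu.ne'
  have hS := isUnit_det_of_vecMul_inv_apply_ne_zero hv.ne'
  change marginalReward P β h F j0 a a' / marginalReward P β q G j0 a' a =
    marginalReward P β h FT j0 a a' / marginalReward P β q GT j0 a' a
  rw [marginalReward_swap P β q G, marginalReward_swap P β q GT, div_neg, div_neg, neg_inj]
  exact div_eq_div_of_mul_eq_mul hu.ne' hv.ne'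
    ((occupancy_update_mul_marginalReward hja hF hFT hT p).trans
      (occupancy_mul_marginalReward_update hja hF hFT hS p).symm)
    ((occupancy_update_mul_marginalReward hja hG hGT hT p).trans
      (occupancy_mul_marginalReward_update hja hG hGT hS p).symm)

/-- Lemma 4.3(b): the marginal productivity metric at `(j0, a', a)` is invariant
under the single-state modification `TS := T_{j0}^{a,a'} S`:
`m_{j0}^{a',a}(S) = m_{j0}^{a',a}(TS)`, where
`m_{j0}^{a',a}(S) := f_{j0}^{a',a}(S) / g_{j0}^{a',a}(S)`, provided the
marginal resource denominators are nonzero and the occupancies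
`x_{p,j0}^{a'}(TS)` and `x_{p,j0}^{a}(S)` are positive for some `p`. -/
theorem stmt11 {N : Type*} [Fintype N] [DecidableEq N] {A : Type*} [Fintype A]
    (P : A → Matrix N N ℝ)
    (hP0 : ∀ a i j, 0 ≤ P a i j) (hP1 : ∀ a i, ∑ j, P a i j = 1)
    (β : ℝ) (hβ0 : 0 < β) (hβ1 : β < 1)
    (h q : A → N → ℝ)
    (σ : N → A) (j0 : N) (a a' : A) (hja : σ j0 = a) (hne : a ≠ a')
    (F : N → ℝ) (hF : ∀ i, F i = h (σ i) i + β * (P (σ i) *ᵥ F) i)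
    (G : N → ℝ) (hG : ∀ i, G i = q (σ i) i + β * (P (σ i) *ᵥ G) i)
    (FT : N → ℝ)
    (hFT : ∀ i, FT i = h (Function.update σ j0 a' i) i +
      β * (P (Function.update σ j0 a' i) *ᵥ FT) i)
    (GT : N → ℝ)
    (hGT : ∀ i, GT i = q (Function.update σ j0 a' i) i +
      β * (P (Function.update σ j0 a' i) *ᵥ GT) i)
    (hgS : q a j0 - q a' j0 + β * ((P a - P a') *ᵥ G) j0 ≠ 0)
    (hgT : q a j0 - q a' j0 + β * ((P a - P a') *ᵥ GT) j0 ≠ 0)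
    (hpos : ∃ p : N → ℝ,
      0 < (p ᵥ* (((1 : Matrix N N ℝ) -
        β • Matrix.of (fun i j => P (Function.update σ j0 a' i) i j))⁻¹)) j0 ∧
      0 < (p ᵥ* (((1 : Matrix N N ℝ) -
        β • Matrix.of (fun i j => P (σ i) i j))⁻¹)) j0) :
    (h a' j0 - h a j0 + β * ((P a' - P a) *ᵥ F) j0) /
      (q a j0 - q a' j0 + β * ((P a - P a') *ᵥ G) j0)
    =
    (h a' j0 - h a j0 + β * ((P a' - P a) *ᵥ FT) j0) /
      (q a j0 - q a' j0 + β * ((P a - P a') *ᵥ GT) j0) :=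
  stmt11_general P β h q σ j0 a a' hja F hF G hG FT hFT GT hGT hpos
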